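/- Let d ≥ 1 and let K be a d-dimensional finite simplicial complex that is doubly Cohen–Macaulay over the field ℚ. Then K has a nowhere zero flow: there exists a d-chain z with values in ℤ such that ∂z = 0 and z(T) ≠ 0 for every face T of K of dimension d. -/

import Mathlib

namespace Paper2CM

variable {V : Type*} [Fintype V] [LinearOrder V]

/-- `sign(t,T) = (−1)^{|{s ∈ T : s < t}|}`. -/
def signOf (t : V) (T : Finset V) : ℤ := (-1) ^ (T.filter (fun s => s < t)).card

/-- The simplicial boundary operator on formal chains with coefficients in an
abelian group `A`: `∂c(S) = Σ_{t ∉ S} sign(t, S ∪ {t}) • c(S ∪ {t})`. -/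
def bdry {A : Type*} [AddCommGroup A] (c : Finset V → A) : Finset V → A :=
  fun S => ∑ t ∈ Sᶜ, signOf t (insert t S) • c (insert t S)

/-- A chain of degree `n - 1`, i.e. supported on sets of cardinality `n`. -/
def IsSimpChain {A : Type*} [AddCommGroup A] (n : ℕ) (c : Finset V → A) : Prop :=
  ∀ T, c T ≠ 0 → T.card = n

/-- `c'` is a subchain of `c`: each coefficient of `c'` agrees with that of `c` or is `0`. -/
def Subchain {A : Type*} [AddCommGroup A] (c' c : Finset V → A) : Prop :=
  ∀ T, c' T = c T ∨ c' T = 0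

/-- A minimal cycle supported on sets of cardinality `n` (so of dimension `n - 1`):
a nonzero cycle whose only subchains that are cycles are `0` and itself. -/
def IsMinimalCycle {A : Type*} [AddCommGroup A] (n : ℕ) (c : Finset V → A) : Prop :=
  c ≠ 0 ∧ IsSimpChain n c ∧ bdry c = 0 ∧
    ∀ c', Subchain c' c → bdry c' = 0 → c' = 0 ∨ c' = c

/-- The simplicial complex spanned by the support of a chain. -/
def spannedComplex {A : Type*} [AddCommGroup A] (c : Finset V → A) : Set (Finset V) :=
  {S | ∃ T, c T ≠ 0 ∧ S ⊆ T}

/-- A (finite) simplicial complex on vertex type `V`: a collection of finite subsets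
closed under taking subsets, containing the empty set. -/
def IsComplex (K : Set (Finset V)) : Prop :=
  ∅ ∈ K ∧ ∀ S ∈ K, ∀ T, T ⊆ S → T ∈ K

/-- The link of a face: `lk_L(T) = {S ∈ L : S ∩ T = ∅, S ∪ T ∈ L}`. -/
def cxLink (L : Set (Finset V)) (T : Finset V) : Set (Finset V) :=
  {S | S ∈ L ∧ Disjoint S T ∧ S ∪ T ∈ L}

/-- A pure complex: every face is contained in a face of maximal cardinality. -/
def IsPure (L : Set (Finset V)) : Prop :=
  ∀ S ∈ L, ∃ F ∈ L, S ⊆ F ∧ ∀ G ∈ L, G.card ≤ F.card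

/-- A chain of the complex `L` supported on faces of `L` of cardinality `n`. -/
def IsChainOn (k : Type*) [Field k] (L : Set (Finset V)) (n : ℕ) (c : Finset V → k) : Prop :=
  ∀ T, c T ≠ 0 → T ∈ L ∧ T.card = n

/-- Vanishing of the reduced homology `H̃_{n-1}(L; k)`: every cycle supported on
cardinality-`n` faces of `L` is the boundary of a chain on cardinality-`(n+1)` faces of `L`. -/
def HomologyVanishes (k : Type*) [Field k] (L : Set (Finset V)) (n : ℕ) : Prop :=
  ∀ c : Finset V → k, IsChainOn k L n c → bdry c = 0 →
    ∃ b : Finset V → k, IsChainOn k L (n + 1) b ∧ bdry b = c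

/-- Cohen–Macaulay over `k` via Reisner's criterion: `L` is pure and for every face
`T ∈ L` and every `i < dim lk_L(T)`, `H̃_i(lk_L(T); k) = 0` (here `i = n - 1`, and
`i < dim lk_L(T)` is expressed as: the link has a face of cardinality `> n`). -/
def IsCM (k : Type*) [Field k] (L : Set (Finset V)) : Prop :=
  IsPure L ∧ ∀ T ∈ L, ∀ n : ℕ, (∃ F ∈ cxLink L T, n < F.card) →
    HomologyVanishes k (cxLink L T) n

/-- Doubly Cohen–Macaulay over `k`: `K` is CM and for every vertex `v` of `K`,
`K − v` is CM of the same dimension as `K` (same maximal cardinality of a face). -/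
def Is2CM (k : Type*) [Field k] (K : Set (Finset V)) : Prop :=
  IsCM k K ∧ ∀ v : V, ({v} : Finset V) ∈ K →
    IsCM k {S | S ∈ K ∧ v ∉ S} ∧
    ∀ S ∈ K, ∃ F ∈ K, v ∉ F ∧ S.card ≤ F.card

end Paper2CM

/-!
Fix a vertex `v` of a `d`-face `T`. The link of `v` inherits the hypotheses one dimension lower,
so by induction it carries a `(d-1)`-cycle `y` with `y (T - v) ≠ 0`. As `y` avoids `v`, it is a
cycle of `K - v`, whose `(d-1)`-st homology vanishes because `K - v` is Cohen–Macaulay of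
dimension `d`; so `y = ∂b` for a `d`-chain `b` of `K - v`. Then `v * y - b` is a `d`-cycle of `K`
which is nonzero on `T`, because `b` vanishes on faces containing `v`. Over the infinite field `ℚ`
a generic linear combination of these cycles, one for each `d`-face, is nowhere zero, and
clearing denominators makes it integral. The induction starts from the empty face, which is a
cycle of the augmented chain complex.
-/

theorem Submodule.exists_forall_apply_ne_zero {ι k : Type*} [Field k] [Infinite k]
    (P : Submodule k (ι → k)) (s : Finset ι) (h : ∀ i ∈ s, ∃ z ∈ P, z i ≠ 0) :
    ∃ z ∈ P, ∀ i ∈ s, z i ≠ 0 := by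
  let p : s → Submodule k P := fun i => LinearMap.ker ((LinearMap.proj (i : ι)).comp P.subtype)
  have hp : ∀ i, p i ≠ ⊤ := by
    rintro ⟨i, hi⟩ htop
    obtain ⟨z, hz, hzi⟩ := h i hi
    exact hzi (LinearMap.mem_ker.mp (htop ▸ Submodule.mem_top (x := (⟨z, hz⟩ : P))))
  obtain ⟨⟨z, hz⟩, -, hnot⟩ := Set.exists_of_ssubset
    (Submodule.iUnion_ssubset_of_forall_ne_top_of_card_lt Finset.univ p hp
      (by simp [ENat.card_eq_top_of_infinite]))
  exact ⟨z, hz, fun i hi h0 => hnot (Set.mem_iUnion₂.mpr ⟨⟨i, hi⟩, Finset.mem_univ _, h0⟩)⟩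

namespace Paper2CM

variable {V : Type*}

def deletion (L : Set (Finset V)) (v : V) : Set (Finset V) := {S | S ∈ L ∧ v ∉ S}

lemma IsComplex.deletion {L : Set (Finset V)} (hL : IsComplex L) (v : V) :
    IsComplex (deletion L v) :=
  ⟨⟨hL.1, Finset.notMem_empty v⟩, fun _ hS _ hTS => ⟨hL.2 _ hS.1 _ hTS, fun h => hS.2 (hTS h)⟩⟩

variable [LinearOrder V]

lemma signOf_insert_self (t : V) (T : Finset V) : signOf t (insert t T) = signOf t T := by
  simp [signOf, Finset.filter_insert]

lemma signOf_insert_of_notMem {t v : V} {T : Finset V} (ht : t ∉ T) :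
    signOf v (insert t T) = (if t < v then -1 else 1) * signOf v T := by
  unfold signOf
  rw [Finset.filter_insert]
  split_ifs with h
  · rw [Finset.card_insert_of_notMem (fun h' => ht (Finset.mem_of_mem_filter t h')), pow_succ,
      mul_comm]
  · ring

lemma signOf_mul_self (t : V) (T : Finset V) : signOf t T * signOf t T = 1 := by
  rw [signOf, ← pow_add]
  exact Even.neg_one_pow ⟨_, rfl⟩

lemma signOf_smul_signOf_smul {A : Type*} [AddCommGroup A] (t : V) (T : Finset V) (x : A) :
    signOf t T • signOf t T • x = x := by
  rw [smul_smul, signOf_mul_self, one_smul]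

lemma signOf_insert_mul_signOf_insert {v t : V} {R : Finset V} (hv : v ∈ R) (ht : t ∉ R) :
    signOf t (insert t R) * signOf v (insert t R) =
      -(signOf v R * signOf t (insert t (R.erase v))) := by
  have htv : t ≠ v := fun h => ht (h ▸ hv)
  have hR : signOf t R = (if v < t then -1 else 1) * signOf t (R.erase v) := by
    conv_lhs => rw [← Finset.insert_erase hv]
    exact signOf_insert_of_notMem (Finset.notMem_erase v R)
  rw [signOf_insert_self, signOf_insert_self, signOf_insert_of_notMem ht, hR]
  rcases htv.lt_or_gt with h | h
  · rw [if_pos h, if_neg h.asymm]; ring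
  · rw [if_neg h.asymm, if_pos h]; ring

lemma cxLink_empty (L : Set (Finset V)) : cxLink L ∅ = L := by
  ext S; simp [cxLink]

lemma cxLink_cxLink {L : Set (Finset V)} (hL : IsComplex L) {T T' : Finset V}
    (hT' : Disjoint T' T) : cxLink (cxLink L T) T' = cxLink L (T' ∪ T) := by
  ext S
  simp only [cxLink, Set.mem_ofPred_eq, Finset.disjoint_union_right, Finset.disjoint_union_left,
    Finset.union_assoc]
  constructor
  · rintro ⟨⟨hS, hST, -⟩, hST', -, -, hSTT⟩
    exact ⟨hS, ⟨hST', hST⟩, hSTT⟩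
  · rintro ⟨hS, ⟨hST', hST⟩, hSTT⟩
    refine ⟨⟨hS, hST, hL.2 _ hSTT _ ?_⟩, hST', ⟨hL.2 _ hSTT _ ?_, ⟨hST, hT'⟩, hSTT⟩⟩ <;>
      intro x <;> simp only [Finset.mem_union] <;> tauto

lemma IsComplex.link {L : Set (Finset V)} (hL : IsComplex L) {T : Finset V} (hT : T ∈ L) :
    IsComplex (cxLink L T) :=
  ⟨⟨hL.1, Finset.disjoint_empty_left T, by rwa [Finset.empty_union]⟩,
    fun _ ⟨hS, hST, hSTL⟩ _ hRS =>
      ⟨hL.2 _ hS _ hRS, hST.mono_left hRS, hL.2 _ hSTL _ (Finset.union_subset_union_left hRS)⟩⟩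

lemma deletion_cxLink (L : Set (Finset V)) {T : Finset V} {u : V} (hu : u ∉ T) :
    deletion (cxLink L T) u = cxLink (deletion L u) T := by
  ext S
  simp only [deletion, cxLink, Set.mem_ofPred_eq, Finset.mem_union]
  tauto

section Chains

variable {A : Type*} [AddCommGroup A]

lemma bdry_map [Fintype V] {B : Type*} [AddCommGroup B] (f : A →+ B) (c : Finset V → A) :
    bdry (f ∘ c) = f ∘ bdry c := by
  funext S
  simp [bdry, map_sum, map_zsmul]

variable (V A) in
def bdryLinearMap [Fintype V] (R : Type*) [Semiring R] [Module R A] :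
    (Finset V → A) →ₗ[R] (Finset V → A) where
  toFun := bdry
  map_add' c c' := by
    funext S
    simp [bdry, smul_add, Finset.sum_add_distrib]
  map_smul' r c := by
    funext S
    simp [bdry, Finset.smul_sum, smul_comm r]

/-- The cone `v * y` over a chain `y`. -/
def cone (v : V) (y : Finset V → A) : Finset V → A :=
  fun S => if v ∈ S then signOf v S • y (S.erase v) else 0

lemma bdry_cone [Fintype V] {v : V} {y : Finset V → A} (hyv : ∀ S, v ∈ S → y S = 0)
    (hy : bdry y = 0) : bdry (cone v y) = y := by
  funext R
  unfold bdry
  by_cases hvR : v ∈ R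
  · have hterm : ∀ t ∈ Rᶜ, signOf t (insert t R) • cone v y (insert t R) =
        -(signOf v R • signOf t (insert t (R.erase v)) • y (insert t (R.erase v))) := by
      intro t ht
      have ht : t ∉ R := Finset.mem_compl.mp ht
      rw [cone, if_pos (Finset.mem_insert_of_mem hvR),
        Finset.erase_insert_of_ne (ne_of_mem_of_not_mem hvR ht).symm, smul_smul,
        signOf_insert_mul_signOf_insert hvR ht, neg_smul, mul_smul]
    have hcycle : ∑ t ∈ Rᶜ, signOf t (insert t (R.erase v)) • y (insert t (R.erase v)) = 0 := by
      have h := congrFun hy (R.erase v)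
      rwa [bdry, Finset.compl_erase, Finset.sum_insert (by simp [hvR]), Finset.insert_erase hvR,
        hyv R hvR, smul_zero, zero_add] at h
    rw [Finset.sum_congr rfl hterm, Finset.sum_neg_distrib, ← Finset.smul_sum, hcycle,
      smul_zero, neg_zero, hyv R hvR]
  · rw [Finset.sum_eq_single_of_mem v (Finset.mem_compl.mpr hvR)]
    · rw [cone, if_pos (Finset.mem_insert_self v R), Finset.erase_insert hvR,
        signOf_smul_signOf_smul]
    · intro t _ htv
      rw [cone, if_neg (by simp [hvR, Ne.symm htv]), smul_zero]

lemma IsChainOn.cone {k : Type*} [Field k] {L : Set (Finset V)} {n : ℕ} {v : V}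
    {y : Finset V → k} (hy : IsChainOn k (cxLink L {v}) n y) :
    IsChainOn k L (n + 1) (cone v y) := by
  intro S hS
  have hvS : v ∈ S := by
    by_contra h
    exact hS (if_neg h)
  obtain ⟨⟨-, -, hSL⟩, hcard⟩ := hy (S.erase v) fun h => hS (by simp [Paper2CM.cone, hvS, h])
  rw [Finset.union_singleton, Finset.insert_erase hvS] at hSL
  exact ⟨hSL, by rw [← Finset.card_erase_add_one hvS, hcard]⟩

end Chains

section Cycles

variable [Fintype V] (k : Type*) [Field k]

def chainSpace (L : Set (Finset V)) (n : ℕ) : Submodule k (Finset V → k) where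
  carrier := {c | IsChainOn k L n c}
  zero_mem' _ h := absurd rfl h
  add_mem' {c c'} hc hc' T h := by
    by_cases hT : c T = 0
    · exact hc' T (by simpa [hT] using h)
    · exact hc T hT
  smul_mem' r c hc T h := hc T (right_ne_zero_of_mul h)

def cycleSpace (L : Set (Finset V)) (n : ℕ) : Submodule k (Finset V → k) :=
  chainSpace k L n ⊓ LinearMap.ker (bdryLinearMap V k k)

end Cycles

section Induction

variable [Fintype V] {k : Type*} [Field k]

def LinksAcyclic (k : Type*) [Field k] (L : Set (Finset V)) : Prop :=
  ∀ T ∈ L, ∀ m : ℕ, (∃ F ∈ cxLink L T, m < F.card) → HomologyVanishes k (cxLink L T) m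

/-- Every deletion `L - v` satisfies Reisner's criterion, and each of its faces lies in a face of
`L - v` of cardinality `n`. -/
structure HasCMDeletions (k : Type*) [Field k] (L : Set (Finset V)) (n : ℕ) : Prop where
  isComplex : IsComplex L
  exists_superset_card_eq :
    ∀ v, {v} ∈ L → ∀ S ∈ deletion L v, ∃ F ∈ deletion L v, S ⊆ F ∧ F.card = n
  linksAcyclic : ∀ v, {v} ∈ L → LinksAcyclic k (deletion L v)

lemma Is2CM.hasCMDeletions {K : Set (Finset V)} {n : ℕ} (h : Is2CM k K) (hK : IsComplex K)
    (hdim : ∀ S ∈ K, S.card ≤ n) (hn : ∃ S ∈ K, S.card = n) : HasCMDeletions k K n where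
  isComplex := hK
  exists_superset_card_eq v hv S hS := by
    obtain ⟨hdel, hfull⟩ := h.2 v hv
    obtain ⟨S₀, hS₀, rfl⟩ := hn
    obtain ⟨F, hF, hSF, hmax⟩ := hdel.1 S hS
    obtain ⟨F₀, hF₀, hvF₀, hF₀c⟩ := hfull S₀ hS₀
    exact ⟨F, hF, hSF, le_antisymm (hdim F hF.1) (hF₀c.trans (hmax F₀ ⟨hF₀, hvF₀⟩))⟩
  linksAcyclic v hv := (h.2 v hv).1.2

lemma HasCMDeletions.link {L : Set (Finset V)} {n : ℕ} {T : Finset V}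
    (h : HasCMDeletions k L (n + T.card)) (hT : T ∈ L) : HasCMDeletions k (cxLink L T) n where
  isComplex := h.isComplex.link hT
  exists_superset_card_eq u hu S hS := by
    have huT : u ∉ T := Finset.disjoint_singleton_left.mp hu.2.1
    rw [deletion_cxLink L huT] at hS ⊢
    obtain ⟨-, hST, hSTu⟩ := hS
    obtain ⟨F, hF, hSTF, hFc⟩ := h.exists_superset_card_eq u hu.1 _ hSTu
    have hTF : T ⊆ F := Finset.subset_union_right.trans hSTF
    refine ⟨F \ T, ⟨(h.isComplex.deletion u).2 _ hF _ Finset.sdiff_subset,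
      Finset.sdiff_disjoint, by rwa [Finset.sdiff_union_of_subset hTF]⟩,
      Finset.subset_sdiff.mpr ⟨Finset.subset_union_left.trans hSTF, hST⟩, ?_⟩
    rw [Finset.card_sdiff_of_subset hTF, hFc, Nat.add_sub_cancel]
  linksAcyclic u hu R hR m := by
    have huT : u ∉ T := Finset.disjoint_singleton_left.mp hu.2.1
    rw [deletion_cxLink L huT] at hR ⊢
    rw [cxLink_cxLink (h.isComplex.deletion u) hR.2.1]
    exact h.linksAcyclic u hu.1 _ hR.2.2 m

theorem HasCMDeletions.exists_cycle_ne_zero {n : ℕ} {L : Set (Finset V)}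
    (h : HasCMDeletions k L n) {T : Finset V} (hT : T ∈ L) (hTc : T.card = n) :
    ∃ z ∈ cycleSpace k L n, z T ≠ 0 := by
  induction n generalizing L T with
  | zero =>
    obtain rfl := Finset.card_eq_zero.mp hTc
    refine ⟨Pi.single ∅ 1, ⟨fun S hS => ?_, ?_⟩, by simp⟩
    · obtain rfl : S = ∅ := by
        by_contra hS'
        exact hS (Pi.single_eq_of_ne hS' 1)
      exact ⟨hT, rfl⟩
    · funext S
      exact Finset.sum_eq_zero fun t _ => by simp [Finset.insert_ne_empty]
  | succ n ih =>
    obtain ⟨v, hv⟩ := Finset.card_pos.mp (by rw [hTc]; exact n.succ_pos)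
    have hvL : {v} ∈ L := h.isComplex.2 _ hT _ (Finset.singleton_subset_iff.mpr hv)
    have hTv : T.erase v ∈ cxLink L {v} :=
      ⟨h.isComplex.2 _ hT _ (Finset.erase_subset v T),
        Finset.disjoint_singleton_right.mpr (Finset.notMem_erase v T),
        by rwa [Finset.union_singleton, Finset.insert_erase hv]⟩
    have hlink : HasCMDeletions k (cxLink L {v}) n :=
      HasCMDeletions.link (by rwa [Finset.card_singleton]) hvL
    obtain ⟨y, ⟨hy, hyc⟩, hyT⟩ :=
      ih hlink hTv (by rw [Finset.card_erase_of_mem hv, hTc, Nat.add_sub_cancel])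
    have hyv : IsChainOn k (deletion L v) n y := fun S hS =>
      ⟨⟨(hy S hS).1.1, Finset.disjoint_singleton_right.mp (hy S hS).1.2.1⟩, (hy S hS).2⟩
    have hdel : HomologyVanishes k (deletion L v) n := by
      have hempty : ∅ ∈ deletion L v := (h.isComplex.deletion v).1
      obtain ⟨F, hF, -, hFc⟩ := h.exists_superset_card_eq v hvL ∅ hempty
      simpa only [cxLink_empty] using
        h.linksAcyclic v hvL ∅ hempty n ⟨F, by rwa [cxLink_empty], by omega⟩
    obtain ⟨b, hb, rfl⟩ := hdel y hyv hyc
    have hbv : b T = 0 := by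
      by_contra hbT
      exact (hb T hbT).1.2 hv
    have hbL : b ∈ chainSpace k L (n + 1) := fun S hS => ⟨(hb S hS).1.1, (hb S hS).2⟩
    refine ⟨cone v (bdry b) - b, ⟨sub_mem hy.cone hbL, ?_⟩, ?_⟩
    · show bdryLinearMap V k k (cone v (bdry b) - b) = 0
      rw [map_sub, sub_eq_zero]
      exact bdry_cone (fun S hvS => by_contra fun hS => (hyv S hS).1.2 hvS) hyc
    · rw [Pi.sub_apply, hbv, sub_zero, cone, if_pos hv]
      intro h0
      apply hyT
      rw [← signOf_smul_signOf_smul v T (bdry b (T.erase v)), h0, smul_zero]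

end Induction

lemma exists_int_cycle_of_rat_cycle [Fintype V] {z : Finset V → ℚ} (hz : bdry z = 0) :
    ∃ w : Finset V → ℤ, bdry w = 0 ∧ ∀ T, w T = 0 ↔ z T = 0 := by
  obtain ⟨⟨N, hN⟩, hint⟩ := IsLocalization.exist_integer_multiples_of_finite (nonZeroDivisors ℤ) z
  choose w hw using hint
  have hw' : Int.castAddHom ℚ ∘ w = (N : ℚ) • z := by
    funext T
    simpa using hw T
  have hN0 : (N : ℚ) ≠ 0 := by exact_mod_cast nonZeroDivisors.ne_zero hN
  refine ⟨w, ?_, fun T => ?_⟩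
  · have hbdry := bdry_map (Int.castAddHom ℚ) w
    rw [hw', show bdry ((N : ℚ) • z) = (N : ℚ) • bdry z from
      map_smul (bdryLinearMap V ℚ ℚ) (N : ℚ) z, hz, smul_zero] at hbdry
    funext S
    simpa using (congrFun hbdry S).symm
  · have hwT := congrFun hw' T
    simp only [Function.comp_apply, Int.coe_castAddHom, Pi.smul_apply, smul_eq_mul] at hwT
    rw [← Int.cast_eq_zero (α := ℚ), hwT, mul_eq_zero, or_iff_right hN0]

theorem two_CM_has_nowhere_zero_flow_general
    {V : Type*} [Fintype V] [LinearOrder V]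
    (d : ℕ) (K : Set (Finset V))
    (hK : IsComplex K)
    (hdim : (∀ S ∈ K, S.card ≤ d + 1) ∧ ∃ S ∈ K, S.card = d + 1)
    (h2cm : Is2CM ℚ K) :
    ∃ z : Finset V → ℤ,
      (∀ T, z T ≠ 0 → T ∈ K ∧ T.card = d + 1) ∧
      bdry z = 0 ∧
      ∀ T ∈ K, T.card = d + 1 → z T ≠ 0 := by
  classical
  have hK' : HasCMDeletions ℚ K (d + 1) := h2cm.hasCMDeletions hK hdim.1 hdim.2
  obtain ⟨z, ⟨hzK, hz⟩, hz0⟩ := (cycleSpace ℚ K (d + 1)).exists_forall_apply_ne_zero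
    (Finset.univ.filter fun T => T ∈ K ∧ T.card = d + 1) fun T hT =>
      hK'.exists_cycle_ne_zero (Finset.mem_filter.mp hT).2.1 (Finset.mem_filter.mp hT).2.2
  obtain ⟨w, hw, hwz⟩ := exists_int_cycle_of_rat_cycle hz
  exact ⟨w, fun T hT => hzK T ((hwz T).not.mp hT), hw,
    fun T hT hTc => (hwz T).not.mpr (hz0 T (by simp [hT, hTc]))⟩

/-- Every `d`-dimensional doubly Cohen–Macaulay complex over `ℚ`
(`d ≥ 1`) has a nowhere zero flow: an integer-valued `d`-chain `z` supported on the
`d`-faces of `K`, with `∂z = 0`, which is nonzero on every `d`-face of `K`. -/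
theorem two_CM_has_nowhere_zero_flow
    {V : Type*} [Fintype V] [LinearOrder V]
    (d : ℕ) (hd : 1 ≤ d) (K : Set (Finset V))
    (hK : IsComplex K)
    (hdim : (∀ S ∈ K, S.card ≤ d + 1) ∧ ∃ S ∈ K, S.card = d + 1)
    (h2cm : Is2CM ℚ K) :
    ∃ z : Finset V → ℤ,
      (∀ T, z T ≠ 0 → T ∈ K ∧ T.card = d + 1) ∧
      bdry z = 0 ∧
      ∀ T ∈ K, T.card = d + 1 → z T ≠ 0 :=
  two_CM_has_nowhere_zero_flow_general d K hK hdim h2cm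

end Paper2CM
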